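/- Suppose the network has connectivity at least μ̃ with μ̃ > 3/4, and θ is a stable equilibrium. Then |ρ₂| ≥ 1/2, where ρ₂ = (1/n)·∑_j exp(2iθ_j). -/

import Mathlib

/-!
Put `ε = 1 - μ`, `Z = ∑ⱼ cos θⱼ`, `R = ∑ⱼ cos 2θⱼ` and `P = ∑ⱼₖ (1 - Aⱼₖ)(1 + cos (θₖ - θⱼ))`.
The equilibrium equations make `cos θ` and `sin θ` eigenvectors of the coupling, so testing
stability against them gives `∑ Aⱼₖ cos² (θₖ - θⱼ) ≤ ∑ Aⱼₖ cos (θₖ - θⱼ)`; comparing with the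
complete graph, this becomes `n² + R² + 2P ≤ 2Z² + 4εn²`. On the other hand, at equilibrium
`∑ₖ (1 - Aⱼₖ)(e^{iθₖ} + e^{iθⱼ}) = Z + βⱼ e^{iθⱼ}` with `βⱼ` real, and Cauchy–Schwarz over the at
most `εn` missing edges of each row, then over the rows, gives `P² + n Z² (n - R)/2 ≤ 2εn² P`.
For `ε < 1/4` the two inequalities force `R ≥ n/2`, that is `Re ρ₂ ≥ 1/2`.
-/

open Real Finset

variable {ι : Type*} [Fintype ι]

theorem sum_sum_cos_sub (φ : ι → ℝ) :
    ∑ j, ∑ k, cos (φ k - φ j) = (∑ j, cos (φ j)) ^ 2 + (∑ j, sin (φ j)) ^ 2 := by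
  rw [sq, sq, sum_mul_sum, sum_mul_sum, ← sum_add_distrib]
  refine sum_congr rfl fun j _ => ?_
  rw [← sum_add_distrib]
  exact sum_congr rfl fun k _ => by rw [cos_sub]; ring

theorem card_sq_add_sq_sum_cos_two_mul_le (θ : ι → ℝ) :
    (Fintype.card ι : ℝ) ^ 2 + (∑ j, cos (2 * θ j)) ^ 2 ≤ 2 * ∑ j, ∑ k, cos (θ k - θ j) ^ 2 := by
  have h := sum_sum_cos_sub (fun j => 2 * θ j)
  have hsq : 2 * ∑ j, ∑ k, cos (θ k - θ j) ^ 2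
      = (Fintype.card ι : ℝ) ^ 2 + ∑ j, ∑ k, cos (2 * θ k - 2 * θ j) := by
    simp only [cos_sq, mul_sub, sum_add_distrib, sum_const, card_univ, nsmul_eq_mul, mul_add,
      ← sum_div]
    ring
  nlinarith [sq_nonneg (∑ j, sin (2 * θ j))]

theorem sum_sin_sq (θ : ι → ℝ) :
    ∑ j, sin (θ j) ^ 2 = ((Fintype.card ι : ℝ) - ∑ j, cos (2 * θ j)) / 2 := by
  simp only [sin_sq_eq_half_sub, sum_sub_distrib, sum_const, card_univ, nsmul_eq_mul, ← sum_div]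
  ring

theorem re_one_div_mul_sum_exp_two_mul_I (n : ℕ) (θ : ι → ℝ) :
    ((1 / (n : ℂ)) * ∑ j, Complex.exp (2 * Complex.I * θ j)).re = (∑ j, cos (2 * θ j)) / n := by
  have hterm (j : ι) : (Complex.exp (2 * Complex.I * θ j)).re = cos (2 * θ j) := by
    rw [← Complex.exp_ofReal_mul_I_re]; push_cast; ring_nf
  rw [one_div, ← Complex.ofReal_natCast, ← Complex.ofReal_inv, Complex.re_ofReal_mul,
    Complex.re_sum]
  simp only [hterm, div_eq_inv_mul]

theorem sq_add_sq_sum_mul_le {w x y : ι → ℝ} (hw : ∀ k, 0 ≤ w k) :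
    (∑ k, w k * x k) ^ 2 + (∑ k, w k * y k) ^ 2 ≤ (∑ k, w k) * ∑ k, w k * (x k ^ 2 + y k ^ 2) := by
  have cs (z : ι → ℝ) : (∑ k, w k * z k) ^ 2 ≤ (∑ k, w k) * ∑ k, w k * z k ^ 2 :=
    sum_sq_le_sum_mul_sum_of_sq_le_mul _ (fun k _ => hw k)
      (fun k _ => mul_nonneg (hw k) (sq_nonneg _)) fun k _ => (by ring : (w k * z k) ^ 2 = _).le
  have := add_le_add (cs x) (cs y)
  simpa only [mul_add, sum_add_distrib] using this

theorem sum_sum_mul_sub_sq_of_symm {W : ι → ι → ℝ} (hW : ∀ j k, W j k = W k j) (v : ι → ℝ) :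
    ∑ j, ∑ k, W j k * (v j - v k) ^ 2 = 2 * ∑ j, ∑ k, W j k * (v j ^ 2 - v j * v k) := by
  have hswap : ∑ j, ∑ k, W j k * v k ^ 2 = ∑ j, ∑ k, W j k * v j ^ 2 := by
    rw [sum_comm]; simp only [hW]
  calc ∑ j, ∑ k, W j k * (v j - v k) ^ 2
      = ∑ j, ∑ k, (2 * (W j k * (v j ^ 2 - v j * v k)) + (W j k * v k ^ 2 - W j k * v j ^ 2)) :=
        sum_congr rfl fun j _ => sum_congr rfl fun k _ => by ring
    _ = 2 * ∑ j, ∑ k, W j k * (v j ^ 2 - v j * v k) := by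
        simp only [sum_add_distrib, sum_sub_distrib, mul_sum, hswap]; ring

namespace Kuramoto

variable (A : ι → ι → ℝ) (θ : ι → ℝ)

noncomputable def localOrderParam (j : ι) : ℝ := ∑ k, A j k * cos (θ k - θ j)

def IsEquilibrium : Prop := ∀ j, ∑ k, A j k * sin (θ k - θ j) = 0

def IsLinearlyStable : Prop :=
  ∀ v : ι → ℝ, 0 ≤ ∑ j, ∑ k, A j k * cos (θ k - θ j) * (v j - v k) ^ 2

noncomputable def nonEdgeAlignment : ℝ := ∑ j, ∑ k, (1 - A j k) * (1 + cos (θ k - θ j))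

variable {A θ}

theorem IsEquilibrium.sum_mul_cos (h : IsEquilibrium A θ) (j : ι) :
    ∑ k, A j k * cos (θ k) = localOrderParam A θ j * cos (θ j) := by
  calc ∑ k, A j k * cos (θ k)
      = ∑ k, A j k * (cos (θ k - θ j) * cos (θ j) - sin (θ k - θ j) * sin (θ j)) := by
        simp only [← cos_add, sub_add_cancel]
    _ = localOrderParam A θ j * cos (θ j) - (∑ k, A j k * sin (θ k - θ j)) * sin (θ j) := by
        simp only [localOrderParam, mul_sub, sum_sub_distrib, sum_mul, mul_assoc]
    _ = localOrderParam A θ j * cos (θ j) := by rw [h j]; ring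

theorem IsEquilibrium.sum_mul_sin (h : IsEquilibrium A θ) (j : ι) :
    ∑ k, A j k * sin (θ k) = localOrderParam A θ j * sin (θ j) := by
  calc ∑ k, A j k * sin (θ k)
      = ∑ k, A j k * (sin (θ k - θ j) * cos (θ j) + cos (θ k - θ j) * sin (θ j)) := by
        simp only [← sin_add, sub_add_cancel]
    _ = (∑ k, A j k * sin (θ k - θ j)) * cos (θ j) + localOrderParam A θ j * sin (θ j) := by
        simp only [localOrderParam, mul_add, sum_add_distrib, sum_mul, mul_assoc]
    _ = localOrderParam A θ j * sin (θ j) := by rw [h j]; ring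

theorem IsLinearlyStable.sum_sum_mul_cos_sub_one_le (hsym : ∀ j k, A j k = A k j)
    (hstab : IsLinearlyStable A θ) {v : ι → ℝ}
    (hv : ∀ j, ∑ k, A j k * v k = localOrderParam A θ j * v j) :
    ∑ j, ∑ k, A j k * (cos (θ k - θ j) - 1) * (v j * v k) ≤ 0 := by
  have h := hstab v
  rw [sum_sum_mul_sub_sq_of_symm (fun j k => by rw [hsym, ← cos_neg, neg_sub])] at h
  have heigen : ∑ j, ∑ k, A j k * cos (θ k - θ j) * v j ^ 2 = ∑ j, ∑ k, A j k * (v j * v k) := by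
    refine sum_congr rfl fun j _ => ?_
    rw [← sum_mul, ← localOrderParam, sq, ← mul_assoc, ← hv j, sum_mul]
    exact sum_congr rfl fun k _ => by ring
  have hsplit : ∑ j, ∑ k, A j k * (cos (θ k - θ j) - 1) * (v j * v k)
      + ∑ j, ∑ k, A j k * cos (θ k - θ j) * (v j ^ 2 - v j * v k)
      = ∑ j, ∑ k, A j k * cos (θ k - θ j) * v j ^ 2 - ∑ j, ∑ k, A j k * (v j * v k) := by
    simp only [← sum_add_distrib, ← sum_sub_distrib]
    exact sum_congr rfl fun j _ => sum_congr rfl fun k _ => by ring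
  linarith

theorem sum_sum_mul_cos_sq_le (hsym : ∀ j k, A j k = A k j) (heq : IsEquilibrium A θ)
    (hstab : IsLinearlyStable A θ) :
    ∑ j, ∑ k, A j k * cos (θ k - θ j) ^ 2 ≤ ∑ j, ∑ k, A j k * cos (θ k - θ j) := by
  have hc := hstab.sum_sum_mul_cos_sub_one_le hsym heq.sum_mul_cos
  have hs := hstab.sum_sum_mul_cos_sub_one_le hsym heq.sum_mul_sin
  have : ∑ j, ∑ k, A j k * (cos (θ k - θ j) - 1) * (cos (θ j) * cos (θ k))
      + ∑ j, ∑ k, A j k * (cos (θ k - θ j) - 1) * (sin (θ j) * sin (θ k))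
      = ∑ j, ∑ k, A j k * cos (θ k - θ j) ^ 2 - ∑ j, ∑ k, A j k * cos (θ k - θ j) := by
    simp only [← sum_add_distrib, ← sum_sub_distrib]
    exact sum_congr rfl fun j _ => sum_congr rfl fun k _ => by rw [cos_sub]; ring
  linarith

theorem card_sq_add_sq_add_two_mul_nonEdgeAlignment_le (hA1 : ∀ j k, A j k ≤ 1)
    (hsin : ∑ j, sin (θ j) = 0)
    (hcos : ∑ j, ∑ k, A j k * cos (θ k - θ j) ^ 2 ≤ ∑ j, ∑ k, A j k * cos (θ k - θ j)) :
    (Fintype.card ι : ℝ) ^ 2 + (∑ j, cos (2 * θ j)) ^ 2 + 2 * nonEdgeAlignment A θ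
      ≤ 2 * (∑ j, cos (θ j)) ^ 2 + 4 * ∑ j, ∑ k, (1 - A j k) := by
  have hpt : ∀ j k, cos (θ k - θ j) ^ 2 ≤ A j k * cos (θ k - θ j) ^ 2
      + (cos (θ k - θ j) - A j k * cos (θ k - θ j)) + 2 * (1 - A j k)
      - (1 - A j k) * (1 + cos (θ k - θ j)) := fun j k => by
    nlinarith [mul_nonneg (sub_nonneg.2 (hA1 j k)) (sub_nonneg.2 (cos_sq_le_one (θ k - θ j)))]
  have hsum := sum_le_sum fun j (_ : j ∈ univ) => sum_le_sum fun k (_ : k ∈ univ) => hpt j k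
  have hcard := card_sq_add_sq_sum_cos_two_mul_le θ
  have hcos_sum := sum_sum_cos_sub θ
  rw [hsin] at hcos_sum
  unfold nonEdgeAlignment
  simp only [sum_add_distrib, sum_sub_distrib, ← mul_sum] at hsum ⊢
  linarith

theorem IsEquilibrium.sq_add_sq_le_row (hA1 : ∀ j k, A j k ≤ 1) (h : IsEquilibrium A θ)
    (hsin : ∑ j, sin (θ j) = 0) (j : ι) :
    ((∑ k, cos (θ k)) * cos (θ j) + (∑ k, (1 - A j k) - localOrderParam A θ j)) ^ 2
        + (∑ k, cos (θ k)) ^ 2 * sin (θ j) ^ 2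
      ≤ 2 * (∑ k, (1 - A j k)) * ∑ k, (1 - A j k) * (1 + cos (θ k - θ j)) := by
  set Z := ∑ k, cos (θ k)
  set β := ∑ k, (1 - A j k) - localOrderParam A θ j
  have hx : ∑ k, (1 - A j k) * (cos (θ k) + cos (θ j)) = Z + β * cos (θ j) := by
    have e : ∀ k, (1 - A j k) * (cos (θ k) + cos (θ j))
        = cos (θ k) - A j k * cos (θ k) + (1 - A j k) * cos (θ j) := fun k => by ring
    simp only [e, sum_add_distrib, sum_sub_distrib, ← sum_mul, h.sum_mul_cos, β, Z]
    ring
  have hy : ∑ k, (1 - A j k) * (sin (θ k) + sin (θ j)) = β * sin (θ j) := by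
    have e : ∀ k, (1 - A j k) * (sin (θ k) + sin (θ j))
        = sin (θ k) - A j k * sin (θ k) + (1 - A j k) * sin (θ j) := fun k => by ring
    simp only [e, sum_add_distrib, sum_sub_distrib, ← sum_mul, h.sum_mul_sin, hsin, β]
    ring
  have hnorm : ∀ k, (cos (θ k) + cos (θ j)) ^ 2 + (sin (θ k) + sin (θ j)) ^ 2
      = 2 * (1 + cos (θ k - θ j)) := fun k => by
    rw [cos_sub]
    linear_combination sin_sq_add_cos_sq (θ k) + sin_sq_add_cos_sq (θ j)
  have hcs := sq_add_sq_sum_mul_le (x := fun k => cos (θ k) + cos (θ j))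
    (y := fun k => sin (θ k) + sin (θ j)) fun k => sub_nonneg.2 (hA1 j k)
  simp only [hx, hy, hnorm] at hcs
  calc (Z * cos (θ j) + β) ^ 2 + Z ^ 2 * sin (θ j) ^ 2
      = (Z + β * cos (θ j)) ^ 2 + (β * sin (θ j)) ^ 2 := by
        linear_combination (Z ^ 2 - β ^ 2) * sin_sq_add_cos_sq (θ j)
    _ ≤ _ := hcs
    _ = _ := by
        rw [show ∑ k, (1 - A j k) * (2 * (1 + cos (θ k - θ j)))
            = 2 * ∑ k, (1 - A j k) * (1 + cos (θ k - θ j)) by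
          rw [mul_sum]; exact sum_congr rfl fun k _ => by ring]
        ring

theorem sum_mul_cos_add_sub_localOrderParam (hsin : ∑ j, sin (θ j) = 0) :
    ∑ j, ((∑ k, cos (θ k)) * cos (θ j) + (∑ k, (1 - A j k) - localOrderParam A θ j))
      = nonEdgeAlignment A θ := by
  have hcos_sum := sum_sum_cos_sub θ
  rw [hsin] at hcos_sum
  have e : ∀ j k, (1 - A j k) * (1 + cos (θ k - θ j))
      = (1 - A j k) - A j k * cos (θ k - θ j) + cos (θ k - θ j) := fun j k => by ring
  simp only [nonEdgeAlignment, localOrderParam, e, sum_add_distrib, sum_sub_distrib, ← mul_sum,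
    hcos_sum]
  ring

theorem nonEdgeAlignment_sq_add_le (hA1 : ∀ j k, A j k ≤ 1) (heq : IsEquilibrium A θ)
    (hsin : ∑ j, sin (θ j) = 0) {β : ℝ} (hb : ∀ j, ∑ k, (1 - A j k) ≤ β) :
    nonEdgeAlignment A θ ^ 2 + Fintype.card ι * (∑ j, cos (θ j)) ^ 2 * ∑ j, sin (θ j) ^ 2
      ≤ 2 * β * Fintype.card ι * nonEdgeAlignment A θ := by
  set f := fun j => (∑ k, cos (θ k)) * cos (θ j) + (∑ k, (1 - A j k) - localOrderParam A θ j)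
  have hcs : (∑ j, f j) ^ 2 ≤ Fintype.card ι * ∑ j, f j ^ 2 := sq_sum_le_card_mul_sum_sq
  rw [sum_mul_cos_add_sub_localOrderParam hsin] at hcs
  have hrows : ∑ j, (f j ^ 2 + (∑ k, cos (θ k)) ^ 2 * sin (θ j) ^ 2)
      ≤ 2 * β * nonEdgeAlignment A θ :=
    calc _ ≤ ∑ j, 2 * (∑ k, (1 - A j k)) * ∑ k, (1 - A j k) * (1 + cos (θ k - θ j)) :=
          sum_le_sum fun j _ => heq.sq_add_sq_le_row hA1 hsin j
      _ ≤ ∑ j, 2 * β * ∑ k, (1 - A j k) * (1 + cos (θ k - θ j)) := by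
          refine sum_le_sum fun j _ => mul_le_mul_of_nonneg_right (by linarith [hb j]) ?_
          exact sum_nonneg fun k _ =>
            mul_nonneg (sub_nonneg.2 (hA1 j k)) (by linarith [neg_one_le_cos (θ k - θ j)])
      _ = 2 * β * nonEdgeAlignment A θ := by rw [nonEdgeAlignment, mul_sum]
  simp only [sum_add_distrib, ← mul_sum] at hrows
  linarith [mul_le_mul_of_nonneg_left hrows (Nat.cast_nonneg (Fintype.card ι) : (0 : ℝ) ≤ _)]

end Kuramoto

theorem half_le_of_alignment_bounds {N ε Z P R : ℝ} (hN : 0 < N) (hε0 : 0 ≤ ε) (hε : ε < 1 / 4)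
    (hE : P ^ 2 + N * Z * ((N - R) / 2) ≤ 2 * (ε * N) * N * P)
    (hD : N ^ 2 + R ^ 2 + 2 * P ≤ 2 * Z + 4 * (N * (ε * N))) :
    N / 2 ≤ R := by
  by_contra! hR
  -- Inserting the lower bound on `Z` from `hD` into `hE` leaves a quadratic inequality in `q`
  -- whose discriminant is negative.
  obtain ⟨q, hq⟩ : ∃ q, q = 2 * ε * N ^ 2 - P := ⟨_, rfl⟩
  obtain ⟨β, hβ⟩ : ∃ β, β = N * (N - R) + 4 * ε * N ^ 2 := ⟨_, rfl⟩
  obtain ⟨γ, hγ⟩ : ∃ γ, γ = N * (N - R) * (N ^ 2 + R ^ 2) / 2 := ⟨_, rfl⟩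
  have hZ : (N ^ 2 + R ^ 2) / 2 - q ≤ Z := by linarith
  have hquad : 2 * q ^ 2 - β * q + γ ≤ 0 := by
    have := mul_le_mul_of_nonneg_left hZ (by nlinarith : 0 ≤ N * (N - R))
    subst hq hβ hγ
    linear_combination 2 * hE + this
  have hdisc : β ^ 2 < 8 * γ := by
    have h1 : 0 < (N - 4 * ε * N) * (3 * N - 2 * R + 4 * ε * N) := by
      apply mul_pos <;> nlinarith
    have h2 : 0 ≤ R ^ 2 * (3 * N - 4 * R) := mul_nonneg (sq_nonneg R) (by linarith)
    have : 8 * γ - β ^ 2 = N * (R ^ 2 * (3 * N - 4 * R))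
        + N ^ 2 * ((N - 4 * ε * N) * (3 * N - 2 * R + 4 * ε * N)) := by
      subst hβ hγ; ring
    nlinarith [mul_nonneg hN.le h2, mul_pos (pow_pos hN 2) h1]
  nlinarith [sq_nonneg (4 * q - β)]

open Kuramoto

theorem stable_equilibrium_abs_rho2_ge_half_general
    (n : ℕ) (hn : 1 ≤ n) (A : Fin n → Fin n → ℝ) (θ : Fin n → ℝ) (μ : ℝ)
    (hμ0 : 3 / 4 < μ) (hμ1 : μ ≤ 1)
    (hsym : ∀ j k, A j k = A k j)
    (h01 : ∀ j k, A j k = 0 ∨ A j k = 1)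
    (hconn : ∀ j, μ * n ≤ ∑ k : Fin n, A j k)
    (heq : ∀ j, ∑ k : Fin n, A j k * Real.sin (θ k - θ j) = 0)
    (hstab : ∀ v : Fin n → ℝ,
      0 ≤ ∑ j : Fin n, ∑ k : Fin n,
            A j k * Real.cos (θ k - θ j) * (v j - v k) ^ 2)
    (hsin0 : ∑ j : Fin n, Real.sin (θ j) = 0)
    (ρ₂ : ℂ) (hρ₂ : ρ₂ = (1 / (n : ℂ)) *
        ∑ j : Fin n, Complex.exp (2 * Complex.I * (θ j : ℂ))) :
    ‖ρ₂‖ ≥ 1 / 2 := by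
  have hN : (0 : ℝ) < n := by exact_mod_cast hn
  have hA1 : ∀ j k, A j k ≤ 1 := fun j k => by rcases h01 j k with h | h <;> linarith
  have hb : ∀ j, ∑ k, (1 - A j k) ≤ (1 - μ) * n := fun j => by
    simp only [sum_sub_distrib, sum_const, card_univ, Fintype.card_fin, nsmul_eq_mul, mul_one]
    linarith [hconn j]
  have hB : ∑ j, ∑ k, (1 - A j k) ≤ n * ((1 - μ) * n) := by
    simpa using sum_le_sum fun j (_ : j ∈ univ) => hb j
  have hD := card_sq_add_sq_add_two_mul_nonEdgeAlignment_le hA1 hsin0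
    (sum_sum_mul_cos_sq_le hsym heq hstab)
  have hE := nonEdgeAlignment_sq_add_le hA1 heq hsin0 hb
  rw [Fintype.card_fin] at hD hE
  rw [sum_sin_sq, Fintype.card_fin] at hE
  have hR : (n : ℝ) / 2 ≤ ∑ j, cos (2 * θ j) :=
    half_le_of_alignment_bounds hN (by linarith) (by linarith) hE (by linarith)
  calc (1 : ℝ) / 2 ≤ ρ₂.re := by
        rw [hρ₂, re_one_div_mul_sum_exp_two_mul_I, le_div_iff₀ hN]; linarith
    _ ≤ ‖ρ₂‖ := Complex.re_le_norm ρ₂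

/-- If the network has connectivity at least `μ̃ > 3/4` and `θ` is a stable equilibrium, then
`|ρ₂| ≥ 1/2`. -/
theorem stable_equilibrium_abs_rho2_ge_half
    (n : ℕ) (hn : 1 ≤ n) (A : Fin n → Fin n → ℝ) (θ : Fin n → ℝ) (μ : ℝ)
    (hμ0 : 3 / 4 < μ) (hμ1 : μ ≤ 1)
    (hsym : ∀ j k, A j k = A k j)
    (h01 : ∀ j k, A j k = 0 ∨ A j k = 1)
    (hdiag : ∀ j, A j j = 1)
    (hconn : ∀ j, μ * n ≤ ∑ k : Fin n, A j k)
    (heq : ∀ j, ∑ k : Fin n, A j k * Real.sin (θ k - θ j) = 0)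
    (hstab : ∀ v : Fin n → ℝ,
      0 ≤ ∑ j : Fin n, ∑ k : Fin n,
            A j k * Real.cos (θ k - θ j) * (v j - v k) ^ 2)
    (hsin0 : ∑ j : Fin n, Real.sin (θ j) = 0)
    (hρ₁nonneg : 0 ≤ (1 / (n : ℝ)) * ∑ j : Fin n, Real.cos (θ j))
    (ρ₂ : ℂ) (hρ₂ : ρ₂ = (1 / (n : ℂ)) *
        ∑ j : Fin n, Complex.exp (2 * Complex.I * (θ j : ℂ))) :
    ‖ρ₂‖ ≥ 1 / 2 :=
  stable_equilibrium_abs_rho2_ge_half_general n hn A θ μ hμ0 hμ1 hsym h01 hconn heq hstab hsin0 ρ₂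
    hρ₂
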